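/- arXiv:2505.11923 — 2 statements merged into one kernel-verified Lean document; each statement's English description precedes it below -/
import Mathlib

section
/- Let ρ, ρ̂, v, D̂₀ be as in the context, let m > 0 and w ∈ ℝ, and write k² := k₁² + k₂². Then m + ∫_{ℝ²} [ (k₂²/D̂₀(k)²) ( v² − v²k₁²/k² + 4v⁴k₁²/D̂₀(k) − 2v²k₁²/D̂₀(k) − 2v⁴k₁⁴/(k² D̂₀(k)) − 1 − v²k₁²/k² ) + 1/D̂₀(k) ] ρ̂(k)² dk + ∫_{ℝ²} ( w² k₂² / D̂₀(k)² + 4 w² v² k₁² k₂² / D̂₀(k)³ ) |∇ρ̂(k)|² dk > 0. -/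
open MeasureTheory

noncomputable section

/-- First partial derivative `∂₁ f` of a function on `ℝ²`. -/
def pd1 (f : ℝ × ℝ → ℝ) (k : ℝ × ℝ) : ℝ := fderiv ℝ f k (1, 0)

/-- Second partial derivative `∂₂ f` of a function on `ℝ²`. -/
def pd2 (f : ℝ × ℝ → ℝ) (k : ℝ × ℝ) : ℝ := fderiv ℝ f k (0, 1)

/-- `|∇f(k)|² = (∂₁f(k))² + (∂₂f(k))²`. -/
def gradSq (f : ℝ × ℝ → ℝ) (k : ℝ × ℝ) : ℝ := pd1 f k ^ 2 + pd2 f k ^ 2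

/-- The symbol `D̂₀(k) = k₁² + k₂² - v²k₁²` of the boosted wave operator. -/
def D0 (v : ℝ) (k : ℝ × ℝ) : ℝ := k.1 ^ 2 + k.2 ^ 2 - v ^ 2 * k.1 ^ 2

lemma bracket_nonneg (v : ℝ) (hv0 : 0 ≤ v) (hv1 : v < 1) (k : ℝ × ℝ) :
    0 ≤ (k.2 ^ 2 / (D0 v k) ^ 2) *
            (v ^ 2 - v ^ 2 * k.1 ^ 2 / (k.1 ^ 2 + k.2 ^ 2)
              + 4 * v ^ 4 * k.1 ^ 2 / D0 v k
              - 2 * v ^ 2 * k.1 ^ 2 / D0 v k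
              - 2 * v ^ 4 * k.1 ^ 4 / ((k.1 ^ 2 + k.2 ^ 2) * D0 v k)
              - 1 - v ^ 2 * k.1 ^ 2 / (k.1 ^ 2 + k.2 ^ 2))
          + 1 / D0 v k := by
  have hu : v ^ 2 < 1 := by nlinarith
  by_cases hk : k = 0
  · simp [hk, D0]
  · have hK : 0 < k.1 ^ 2 + k.2 ^ 2 := by
      rcases Prod.mk.injEq k.1 k.2 0 0 ▸ hk with h
      have h1 : k.1 ≠ 0 ∨ k.2 ≠ 0 := by
        by_contra hc
        push_neg at hc
        exact hk (Prod.ext hc.1 hc.2)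
      rcases h1 with h1 | h1
      · have := sq_nonneg k.2; positivity
      · have := sq_nonneg k.1; positivity
    have hD : 0 < D0 v k := by
      have h1 : 0 ≤ v ^ 2 * k.2 ^ 2 := by positivity
      have h2 : 0 < (1 - v ^ 2) * (k.1 ^ 2 + k.2 ^ 2) :=
        mul_pos (by linarith) hK
      unfold D0; nlinarith
    have key : (k.2 ^ 2 / (D0 v k) ^ 2) *
            (v ^ 2 - v ^ 2 * k.1 ^ 2 / (k.1 ^ 2 + k.2 ^ 2)
              + 4 * v ^ 4 * k.1 ^ 2 / D0 v k
              - 2 * v ^ 2 * k.1 ^ 2 / D0 v k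
              - 2 * v ^ 4 * k.1 ^ 4 / ((k.1 ^ 2 + k.2 ^ 2) * D0 v k)
              - 1 - v ^ 2 * k.1 ^ 2 / (k.1 ^ 2 + k.2 ^ 2))
          + 1 / D0 v k
        = ((1 - v ^ 2) ^ 2 * k.1 ^ 4
            + (1 - v ^ 2) * (1 - 3 * v ^ 2) * k.1 ^ 2 * k.2 ^ 2
            + v ^ 2 * k.2 ^ 4) / (D0 v k) ^ 3 := by
      have hD' : D0 v k ≠ 0 := ne_of_gt hD
      have hK' : k.1 ^ 2 + k.2 ^ 2 ≠ 0 := ne_of_gt hK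
      field_simp [D0] at *
      unfold D0; ring
    rw [key]
    apply div_nonneg _ (by positivity)
    nlinarith [sq_nonneg ((1 - v ^ 2) * k.1 ^ 2 - v ^ 2 * k.2 ^ 2),
      mul_nonneg (mul_nonneg (by linarith : (0:ℝ) ≤ 1 - v ^ 2) (sq_nonneg k.2))
        (add_nonneg (mul_nonneg (by linarith : (0:ℝ) ≤ 1 - v ^ 2) (sq_nonneg k.1))
          (mul_nonneg (sq_nonneg v) (sq_nonneg k.2)))]

/-- Positivity of the symplectic form entry `Ω₂₄`
(Appendix A, part of Lemma 5.2). -/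
theorem Omega24_pos
    (ρ : ℝ × ℝ → ℝ) (hρsm : ContDiff ℝ (⊤ : ℕ∞) ρ) (hρsupp : HasCompactSupport ρ)
    (hρrad : ∀ x y : ℝ × ℝ, x.1 ^ 2 + x.2 ^ 2 = y.1 ^ 2 + y.2 ^ 2 → ρ x = ρ y)
    (hρne : ρ ≠ 0)
    (hρmom : ∀ a b : ℕ, a + b ≤ 4 → (∫ x : ℝ × ℝ, x.1 ^ a * x.2 ^ b * ρ x) = 0)
    (ρh : ℝ × ℝ → ℝ)
    (hρh : ∀ k : ℝ × ℝ, (ρh k : ℂ) =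
      ∫ x : ℝ × ℝ,
        Complex.exp (-(Complex.I) * ((k.1 * x.1 + k.2 * x.2 : ℝ) : ℂ)) * (ρ x : ℂ))
    (v : ℝ) (hv0 : 0 ≤ v) (hv1 : v < 1)
    (m : ℝ) (hm : 0 < m) (w : ℝ) :
    0 < m
        + (∫ k : ℝ × ℝ,
            ((k.2 ^ 2 / (D0 v k) ^ 2) *
                (v ^ 2 - v ^ 2 * k.1 ^ 2 / (k.1 ^ 2 + k.2 ^ 2)
                  + 4 * v ^ 4 * k.1 ^ 2 / D0 v k
                  - 2 * v ^ 2 * k.1 ^ 2 / D0 v k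
                  - 2 * v ^ 4 * k.1 ^ 4 / ((k.1 ^ 2 + k.2 ^ 2) * D0 v k)
                  - 1 - v ^ 2 * k.1 ^ 2 / (k.1 ^ 2 + k.2 ^ 2))
              + 1 / D0 v k) * ρh k ^ 2)
        + ∫ k : ℝ × ℝ,
            (w ^ 2 * k.2 ^ 2 / (D0 v k) ^ 2
              + 4 * w ^ 2 * v ^ 2 * k.1 ^ 2 * k.2 ^ 2 / (D0 v k) ^ 3) * gradSq ρh k := by
  have hu : v ^ 2 < 1 := by nlinarith
  have h1 : 0 ≤ ∫ k : ℝ × ℝ,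
      ((k.2 ^ 2 / (D0 v k) ^ 2) *
          (v ^ 2 - v ^ 2 * k.1 ^ 2 / (k.1 ^ 2 + k.2 ^ 2)
            + 4 * v ^ 4 * k.1 ^ 2 / D0 v k
            - 2 * v ^ 2 * k.1 ^ 2 / D0 v k
            - 2 * v ^ 4 * k.1 ^ 4 / ((k.1 ^ 2 + k.2 ^ 2) * D0 v k)
            - 1 - v ^ 2 * k.1 ^ 2 / (k.1 ^ 2 + k.2 ^ 2))
        + 1 / D0 v k) * ρh k ^ 2 :=
    integral_nonneg fun k => mul_nonneg (bracket_nonneg v hv0 hv1 k) (sq_nonneg _)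
  have h2 : 0 ≤ ∫ k : ℝ × ℝ,
      (w ^ 2 * k.2 ^ 2 / (D0 v k) ^ 2
        + 4 * w ^ 2 * v ^ 2 * k.1 ^ 2 * k.2 ^ 2 / (D0 v k) ^ 3) * gradSq ρh k := by
    refine integral_nonneg fun k => mul_nonneg ?_ ?_
    · have hD : 0 ≤ D0 v k := by
        have h1 : 0 ≤ v ^ 2 * k.2 ^ 2 := by positivity
        have h2 : 0 ≤ (1 - v ^ 2) * (k.1 ^ 2 + k.2 ^ 2) :=
          mul_nonneg (by linarith) (by positivity)
        unfold D0; nlinarith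
      exact add_nonneg (div_nonneg (by positivity) (by positivity))
        (div_nonneg (by positivity) (pow_nonneg hD 3))
    · exact add_nonneg (sq_nonneg _) (sq_nonneg _)
  linarith
end
end

section
/- Let ρ, ρ̂, v, D̂₀ be as in the context, let m > 0 and w ∈ ℝ, and write k² := k₁² + k₂². Then v² ∫_{ℝ²} k₂⁴ (k² + 3v²k₁²) ρ̂(k)² / (k² D̂₀(k)³) dk + w² ∫_{ℝ²} k₂² (k² + 3v²k₁²) |∇ρ̂(k)|² / D̂₀(k)³ dk + m + ∫_{ℝ²} k₁² ρ̂(k)² / (k² D̂₀(k)) dk − 4v² ∫_{ℝ²} k₁² k₂² ρ̂(k)² / (k² D̂₀(k)²) dk > 0. -/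
open MeasureTheory

noncomputable section

set_option maxHeartbeats 1000000

section AuxLemmas

open Complex Pointwise

lemma norm_exp_mul_I_sub_one_le (a : ℝ) :
    ‖Complex.exp ((a:ℂ) * Complex.I) - 1‖ ≤ 2 * |a| := by
  rcases le_or_gt |a| 1 with h | h
  · have := Complex.norm_exp_sub_one_le (x := (a:ℂ) * Complex.I) (by simpa using h)
    simpa using this
  · have h1 : ‖Complex.exp ((a:ℂ) * Complex.I)‖ = 1 := Complex.norm_exp_ofReal_mul_I a
    calc ‖Complex.exp ((a:ℂ) * Complex.I) - 1‖ ≤ ‖Complex.exp ((a:ℂ)*Complex.I)‖ + ‖(1:ℂ)‖ :=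
          norm_sub_le _ _
      _ = 2 := by rw [h1]; norm_num
      _ ≤ 2 * |a| := by nlinarith

-- basic integrability of the Fourier integrand
lemma integrable_E_mul (ρ : ℝ × ℝ → ℝ) (hρc : Continuous ρ) (hρsupp : HasCompactSupport ρ)
    (k : ℝ × ℝ) :
    Integrable (fun x : ℝ × ℝ =>
      Complex.exp (-(Complex.I) * ((k.1 * x.1 + k.2 * x.2 : ℝ) : ℂ)) * (ρ x : ℂ)) := by
  have hρint : Integrable ρ := hρc.integrable_of_hasCompactSupport hρsupp
  refine (hρint.ofReal.bdd_mul (c := 1) ?_ (Filter.Eventually.of_forall fun x => ?_))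
  · apply Continuous.aestronglyMeasurable
    exact Complex.continuous_exp.comp (by fun_prop)
  · have : -(Complex.I) * ((k.1 * x.1 + k.2 * x.2 : ℝ) : ℂ)
        = ((-(k.1 * x.1 + k.2 * x.2) : ℝ) : ℂ) * Complex.I := by push_cast; ring
    rw [this]
    exact le_of_eq (Complex.norm_exp_ofReal_mul_I _)






lemma exp_dot_sub (p q x : ℝ × ℝ) :
    Complex.exp (-(Complex.I) * ((p.1 * x.1 + p.2 * x.2 : ℝ) : ℂ))
      - Complex.exp (-(Complex.I) * ((q.1 * x.1 + q.2 * x.2 : ℝ) : ℂ))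
    = Complex.exp (-(Complex.I) * ((q.1 * x.1 + q.2 * x.2 : ℝ) : ℂ))
      * (Complex.exp (((-((p.1 - q.1) * x.1 + (p.2 - q.2) * x.2) : ℝ) : ℂ) * Complex.I) - 1) := by
  have : -(Complex.I) * ((p.1 * x.1 + p.2 * x.2 : ℝ) : ℂ)
      = -(Complex.I) * ((q.1 * x.1 + q.2 * x.2 : ℝ) : ℂ)
        + ((-((p.1 - q.1) * x.1 + (p.2 - q.2) * x.2) : ℝ) : ℂ) * Complex.I := by
    push_cast; ring
  rw [this, Complex.exp_add]; ring

lemma rhoh_lip (ρ : ℝ × ℝ → ℝ) (hρc : Continuous ρ) (hρsupp : HasCompactSupport ρ)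
    (ρh : ℝ × ℝ → ℝ)
    (hρh : ∀ k : ℝ × ℝ, (ρh k : ℂ) =
      ∫ x : ℝ × ℝ,
        Complex.exp (-(Complex.I) * ((k.1 * x.1 + k.2 * x.2 : ℝ) : ℂ)) * (ρ x : ℂ)) :
    ∃ L : ℝ, 0 ≤ L ∧ ∀ k k' : ℝ × ℝ, |ρh k - ρh k'| ≤ L * ‖k - k'‖ := by
  have hwint : Integrable (fun x : ℝ × ℝ => (|x.1| + |x.2|) * |ρ x|) := by
    apply Continuous.integrable_of_hasCompactSupport (by fun_prop)
    exact HasCompactSupport.mul_left hρsupp.abs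
  have hwnn : 0 ≤ ∫ x : ℝ × ℝ, (|x.1| + |x.2|) * |ρ x| :=
    integral_nonneg (fun x => by positivity)
  refine ⟨2 * ∫ x : ℝ × ℝ, (|x.1| + |x.2|) * |ρ x|, by positivity, fun k k' => ?_⟩
  have hsub : ((ρh k - ρh k' : ℝ) : ℂ) =
      ∫ x : ℝ × ℝ, (Complex.exp (-(Complex.I) * ((k.1 * x.1 + k.2 * x.2 : ℝ) : ℂ))
        - Complex.exp (-(Complex.I) * ((k'.1 * x.1 + k'.2 * x.2 : ℝ) : ℂ))) * (ρ x : ℂ) := by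
    rw [Complex.ofReal_sub, hρh k, hρh k', ← integral_sub (integrable_E_mul ρ hρc hρsupp k)
      (integrable_E_mul ρ hρc hρsupp k')]
    simp only [sub_mul]
  have hptw : ∀ x : ℝ × ℝ,
      ‖(Complex.exp (-(Complex.I) * ((k.1 * x.1 + k.2 * x.2 : ℝ) : ℂ))
        - Complex.exp (-(Complex.I) * ((k'.1 * x.1 + k'.2 * x.2 : ℝ) : ℂ))) * (ρ x : ℂ)‖
      ≤ (2 * ‖k - k'‖) * ((|x.1| + |x.2|) * |ρ x|) := by
    intro x
    rw [norm_mul, Complex.norm_real]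
    have h2 : ‖Complex.exp (-(Complex.I) * ((k'.1 * x.1 + k'.2 * x.2 : ℝ) : ℂ))‖ = 1 := by
      have : -(Complex.I) * ((k'.1 * x.1 + k'.2 * x.2 : ℝ) : ℂ)
          = ((-(k'.1 * x.1 + k'.2 * x.2) : ℝ) : ℂ) * Complex.I := by push_cast; ring
      rw [this]; exact Complex.norm_exp_ofReal_mul_I _
    have h3 : ‖Complex.exp (-(Complex.I) * ((k.1 * x.1 + k.2 * x.2 : ℝ) : ℂ))
        - Complex.exp (-(Complex.I) * ((k'.1 * x.1 + k'.2 * x.2 : ℝ) : ℂ))‖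
        ≤ 2 * |(k.1 - k'.1) * x.1 + (k.2 - k'.2) * x.2| := by
      rw [exp_dot_sub k k' x, norm_mul, h2, one_mul]
      have h3' := norm_exp_mul_I_sub_one_le (-((k.1 - k'.1) * x.1 + (k.2 - k'.2) * x.2))
      rw [abs_neg] at h3'
      exact h3'
    have e1 : |k.1 - k'.1| ≤ ‖k - k'‖ := by simpa using norm_fst_le (k - k')
    have e2 : |k.2 - k'.2| ≤ ‖k - k'‖ := by simpa using norm_snd_le (k - k')
    have h4 : |(k.1 - k'.1) * x.1 + (k.2 - k'.2) * x.2| ≤ ‖k - k'‖ * (|x.1| + |x.2|) := by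
      calc |(k.1 - k'.1) * x.1 + (k.2 - k'.2) * x.2|
          ≤ |k.1 - k'.1| * |x.1| + |k.2 - k'.2| * |x.2| := by
            rw [← abs_mul, ← abs_mul]; exact abs_add_le _ _
        _ ≤ ‖k - k'‖ * (|x.1| + |x.2|) := by nlinarith [abs_nonneg x.1, abs_nonneg x.2]
    have h6 := h3.trans (by nlinarith : 2 * |(k.1 - k'.1) * x.1 + (k.2 - k'.2) * x.2|
      ≤ 2 * ‖k - k'‖ * (|x.1| + |x.2|))
    calc ‖Complex.exp (-(Complex.I) * ((k.1 * x.1 + k.2 * x.2 : ℝ) : ℂ))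
        - Complex.exp (-(Complex.I) * ((k'.1 * x.1 + k'.2 * x.2 : ℝ) : ℂ))‖ * |ρ x|
        ≤ (2 * ‖k - k'‖ * (|x.1| + |x.2|)) * |ρ x| := mul_le_mul_of_nonneg_right h6 (abs_nonneg _)
      _ = (2 * ‖k - k'‖) * ((|x.1| + |x.2|) * |ρ x|) := by ring
  have habs : |ρh k - ρh k'| = ‖((ρh k - ρh k' : ℝ) : ℂ)‖ := by rw [Complex.norm_real, Real.norm_eq_abs]
  rw [habs, hsub]
  calc ‖∫ x : ℝ × ℝ, (Complex.exp (-(Complex.I) * ((k.1 * x.1 + k.2 * x.2 : ℝ) : ℂ))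
        - Complex.exp (-(Complex.I) * ((k'.1 * x.1 + k'.2 * x.2 : ℝ) : ℂ))) * (ρ x : ℂ)‖
      ≤ ∫ x : ℝ × ℝ, ‖(Complex.exp (-(Complex.I) * ((k.1 * x.1 + k.2 * x.2 : ℝ) : ℂ))
        - Complex.exp (-(Complex.I) * ((k'.1 * x.1 + k'.2 * x.2 : ℝ) : ℂ))) * (ρ x : ℂ)‖ :=
        norm_integral_le_integral_norm _
    _ ≤ ∫ x : ℝ × ℝ, (2 * ‖k - k'‖) * ((|x.1| + |x.2|) * |ρ x|) := by
        apply integral_mono _ (hwint.const_mul _) hptw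
        refine (((integrable_E_mul ρ hρc hρsupp k).sub
          (integrable_E_mul ρ hρc hρsupp k')).norm).congr
          (Filter.Eventually.of_forall fun x => ?_)
        simp only [Pi.sub_apply]
        rw [← sub_mul]
    _ = (2 * ∫ x : ℝ × ℝ, (|x.1| + |x.2|) * |ρ x|) * ‖k - k'‖ := by
        rw [integral_const_mul]; ring




lemma rhoh_zero (ρ : ℝ × ℝ → ℝ) (hmom : (∫ x : ℝ × ℝ, ρ x) = 0)
    (ρh : ℝ × ℝ → ℝ)
    (hρh : ∀ k : ℝ × ℝ, (ρh k : ℂ) =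
      ∫ x : ℝ × ℝ,
        Complex.exp (-(Complex.I) * ((k.1 * x.1 + k.2 * x.2 : ℝ) : ℂ)) * (ρ x : ℂ)) :
    ρh 0 = 0 := by
  have h0 := hρh 0
  simp only [Prod.fst_zero, Prod.snd_zero, zero_mul, add_zero, Complex.ofReal_zero, mul_zero,
    Complex.exp_zero, one_mul] at h0
  have h1 : (∫ x : ℝ×ℝ, (ρ x : ℂ)) = ((∫ x : ℝ×ℝ, ρ x : ℝ) : ℂ) := integral_ofReal
  rw [h1, hmom] at h0
  exact_mod_cast h0

lemma rhoh_decay (ρ : ℝ × ℝ → ℝ) (hρsm : ContDiff ℝ (⊤ : ℕ∞) ρ) (hρsupp : HasCompactSupport ρ)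
    (ρh : ℝ × ℝ → ℝ)
    (hρh : ∀ k : ℝ × ℝ, (ρh k : ℂ) =
      ∫ x : ℝ × ℝ,
        Complex.exp (-(Complex.I) * ((k.1 * x.1 + k.2 * x.2 : ℝ) : ℂ)) * (ρ x : ℂ)) :
    ∃ C : ℝ, 0 ≤ C ∧ ∀ k : ℝ × ℝ, 1 ≤ ‖k‖ → |ρh k| * ‖k‖ ≤ C := by
  have hρc : Continuous ρ := hρsm.continuous
  obtain ⟨Cl, hCl⟩ := ContDiff.lipschitzWith_of_hasCompactSupport hρsupp hρsm (by simp)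
  set T : Set (ℝ × ℝ) := tsupport ρ + Metric.closedBall (0 : ℝ × ℝ) Real.pi with hT
  have hTcomp : IsCompact T := IsCompact.add hρsupp (isCompact_closedBall _ _)
  have hTmeas : MeasurableSet T := hTcomp.isClosed.measurableSet
  set μT : ℝ := (volume T).toReal with hμT
  have hμTnn : 0 ≤ μT := ENNReal.toReal_nonneg
  refine ⟨(Cl : ℝ) * Real.pi * μT / 2, by positivity, fun k hk => ?_⟩
  have hknorm : (0:ℝ) < ‖k‖ := lt_of_lt_of_le one_pos hk
  set r2 : ℝ := k.1 ^ 2 + k.2 ^ 2 with hr2def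
  have hr2 : ‖k‖ ^ 2 ≤ r2 := by
    have hn : ‖k‖ = max |k.1| |k.2| := rfl
    rcases max_cases |k.1| |k.2| with ⟨h1, _⟩ | ⟨h1, _⟩ <;>
      · rw [hr2def, hn, h1]
        nlinarith [_root_.sq_abs k.1, _root_.sq_abs k.2, sq_nonneg k.1, sq_nonneg k.2]
  have hr2pos : (0:ℝ) < r2 := lt_of_lt_of_le (by positivity) hr2
  set h : ℝ × ℝ := (Real.pi / r2) • k with hh
  have hdot : k.1 * h.1 + k.2 * h.2 = Real.pi := by
    have hh1 : h.1 = Real.pi / r2 * k.1 := rfl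
    have hh2 : h.2 = Real.pi / r2 * k.2 := rfl
    rw [hh1, hh2]
    field_simp
    ring
  have hnh : ‖h‖ ≤ Real.pi / ‖k‖ := by
    rw [hh, norm_smul, Real.norm_eq_abs, abs_of_pos (by positivity : (0:ℝ) < Real.pi / r2)]
    rw [div_mul_eq_mul_div, div_le_div_iff₀ hr2pos hknorm]
    nlinarith [Real.pi_pos]
  have hnh' : ‖h‖ ≤ Real.pi := hnh.trans (by
    rw [div_le_iff₀ hknorm]; nlinarith [Real.pi_pos])
  have hnhnn : (0:ℝ) ≤ ‖h‖ := norm_nonneg h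
  -- the shift identity
  have exp_split : ∀ x : ℝ × ℝ,
      Complex.exp (-(Complex.I) * ((k.1 * (x + h).1 + k.2 * (x + h).2 : ℝ) : ℂ))
      = - Complex.exp (-(Complex.I) * ((k.1 * x.1 + k.2 * x.2 : ℝ) : ℂ)) := by
    intro x
    have hdotC : ((k.1 * h.1 + k.2 * h.2 : ℝ) : ℂ) = (Real.pi : ℂ) :=
      congrArg Complex.ofReal hdot
    push_cast at hdotC
    have harg : -(Complex.I) * ((k.1 * (x + h).1 + k.2 * (x + h).2 : ℝ) : ℂ)
        = -(Complex.I) * ((k.1 * x.1 + k.2 * x.2 : ℝ) : ℂ) + -((Real.pi : ℂ) * Complex.I) := by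
      have e1 : (x + h).1 = x.1 + h.1 := rfl
      have e2 : (x + h).2 = x.2 + h.2 := rfl
      rw [e1, e2]
      push_cast
      linear_combination (-Complex.I) * hdotC
    rw [harg, Complex.exp_add, Complex.exp_neg, Complex.exp_pi_mul_I]
    norm_num
  have hshift : (ρh k : ℂ) = - ∫ x : ℝ × ℝ,
      Complex.exp (-(Complex.I) * ((k.1 * x.1 + k.2 * x.2 : ℝ) : ℂ)) * (ρ (x + h) : ℂ) := by
    have base := integral_add_right_eq_self (μ := volume)
      (fun x : ℝ × ℝ => Complex.exp (-(Complex.I) * ((k.1 * x.1 + k.2 * x.2 : ℝ) : ℂ)) * (ρ x : ℂ)) h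
    have e : ∫ x : ℝ × ℝ,
        Complex.exp (-(Complex.I) * ((k.1 * (x + h).1 + k.2 * (x + h).2 : ℝ) : ℂ)) * (ρ (x + h) : ℂ)
        = ∫ x : ℝ × ℝ,
          -(Complex.exp (-(Complex.I) * ((k.1 * x.1 + k.2 * x.2 : ℝ) : ℂ)) * (ρ (x + h) : ℂ)) :=
      integral_congr_ae (Filter.Eventually.of_forall fun x => by
        beta_reduce; rw [exp_split x]; ring)
    rw [hρh k, ← base, e, integral_neg]
  -- integrability of the shifted integrand
  have hshift_int : Integrable (fun x : ℝ × ℝ =>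
      Complex.exp (-(Complex.I) * ((k.1 * x.1 + k.2 * x.2 : ℝ) : ℂ)) * (ρ (x + h) : ℂ)) := by
    have hcs : HasCompactSupport (fun x : ℝ × ℝ => ρ (x + h)) :=
      HasCompactSupport.comp_homeomorph hρsupp (Homeomorph.addRight h)
    have hc : Continuous (fun x : ℝ × ℝ => ρ (x + h)) := hρc.comp (continuous_add_right h)
    have hint2 : Integrable (fun x : ℝ × ℝ => ((ρ (x + h) : ℝ) : ℂ)) :=
      (hc.integrable_of_hasCompactSupport hcs).ofReal
    refine hint2.bdd_mul (c := 1) ?_ (Filter.Eventually.of_forall fun x => ?_)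
    · exact (Complex.continuous_exp.comp (by fun_prop)).aestronglyMeasurable
    · have : -(Complex.I) * ((k.1 * x.1 + k.2 * x.2 : ℝ) : ℂ)
          = ((-(k.1 * x.1 + k.2 * x.2) : ℝ) : ℂ) * Complex.I := by push_cast; ring
      rw [this]
      exact le_of_eq (Complex.norm_exp_ofReal_mul_I _)
  have hEnorm : ∀ x : ℝ × ℝ, ‖Complex.exp (-(Complex.I) * ((k.1 * x.1 + k.2 * x.2 : ℝ) : ℂ))‖ = 1 := by
    intro x
    have : -(Complex.I) * ((k.1 * x.1 + k.2 * x.2 : ℝ) : ℂ)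
        = ((-(k.1 * x.1 + k.2 * x.2) : ℝ) : ℂ) * Complex.I := by push_cast; ring
    rw [this]
    exact Complex.norm_exp_ofReal_mul_I _
  have h2 : ((2 * ρh k : ℝ) : ℂ) = ∫ x : ℝ × ℝ,
      Complex.exp (-(Complex.I) * ((k.1 * x.1 + k.2 * x.2 : ℝ) : ℂ))
        * ((ρ x : ℂ) - (ρ (x + h) : ℂ)) := by
    have e2 : ((2 * ρh k : ℝ) : ℂ) = (ρh k : ℂ) + (ρh k : ℂ) := by push_cast; ring
    rw [e2]
    nth_rewrite 1 [hρh k]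
    nth_rewrite 1 [hshift]
    rw [← sub_eq_add_neg, ← integral_sub (integrable_E_mul ρ hρc hρsupp k) hshift_int]
    exact integral_congr_ae (Filter.Eventually.of_forall fun x => by
      beta_reduce; rw [mul_sub])
  have hptw : ∀ x : ℝ × ℝ,
      ‖Complex.exp (-(Complex.I) * ((k.1 * x.1 + k.2 * x.2 : ℝ) : ℂ))
        * ((ρ x : ℂ) - (ρ (x + h) : ℂ))‖
      ≤ T.indicator (fun _ => (Cl : ℝ) * ‖h‖) x := by
    intro x
    rw [norm_mul, hEnorm x, one_mul, ← Complex.ofReal_sub, Complex.norm_real,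
      Real.norm_eq_abs]
    by_cases hx : x ∈ T
    · rw [Set.indicator_of_mem hx]
      calc |ρ x - ρ (x + h)| = dist (ρ x) (ρ (x + h)) := (Real.dist_eq _ _).symm
        _ ≤ (Cl : ℝ) * dist x (x + h) := hCl.dist_le_mul _ _
        _ = (Cl : ℝ) * ‖h‖ := by rw [dist_self_add_right]
    · rw [Set.indicator_of_notMem hx]
      have hx1 : ρ x = 0 := by
        apply image_eq_zero_of_notMem_tsupport
        intro hmem
        apply hx
        have := Set.add_mem_add hmem (Metric.mem_closedBall_self Real.pi_nonneg
          : (0 : ℝ × ℝ) ∈ Metric.closedBall (0 : ℝ × ℝ) Real.pi)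
        simpa using this
      have hx2 : ρ (x + h) = 0 := by
        apply image_eq_zero_of_notMem_tsupport
        intro hmem
        apply hx
        have hball : -h ∈ Metric.closedBall (0 : ℝ × ℝ) Real.pi := by
          rw [Metric.mem_closedBall, dist_zero_right, norm_neg]
          exact hnh'
        have := Set.add_mem_add hmem hball
        simpa using this
      simp [hx1, hx2]
  have hind_int : Integrable (T.indicator (fun _ => (Cl : ℝ) * ‖h‖)) := by
    rw [integrable_indicator_iff hTmeas]
    exact integrableOn_const hTcomp.measure_lt_top.ne
  have hnorm_int : Integrable (fun x : ℝ × ℝ =>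
      ‖Complex.exp (-(Complex.I) * ((k.1 * x.1 + k.2 * x.2 : ℝ) : ℂ))
        * ((ρ x : ℂ) - (ρ (x + h) : ℂ))‖) := by
    refine (((integrable_E_mul ρ hρc hρsupp k).sub hshift_int).norm).congr
      (Filter.Eventually.of_forall fun x => ?_)
    simp only [Pi.sub_apply]
    rw [← mul_sub]
  have hnorm2 : 2 * |ρh k| ≤ (Cl : ℝ) * ‖h‖ * μT := by
    have e0 : 2 * |ρh k| = ‖((2 * ρh k : ℝ) : ℂ)‖ := by
      rw [Complex.norm_real, Real.norm_eq_abs, abs_mul]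
      norm_num
    rw [e0, h2]
    calc ‖∫ x : ℝ × ℝ, Complex.exp (-(Complex.I) * ((k.1 * x.1 + k.2 * x.2 : ℝ) : ℂ))
          * ((ρ x : ℂ) - (ρ (x + h) : ℂ))‖
        ≤ ∫ x : ℝ × ℝ, ‖Complex.exp (-(Complex.I) * ((k.1 * x.1 + k.2 * x.2 : ℝ) : ℂ))
          * ((ρ x : ℂ) - (ρ (x + h) : ℂ))‖ := norm_integral_le_integral_norm _
      _ ≤ ∫ x : ℝ × ℝ, T.indicator (fun _ => (Cl : ℝ) * ‖h‖) x :=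
          integral_mono hnorm_int hind_int hptw
      _ = (Cl : ℝ) * ‖h‖ * μT := by
          rw [integral_indicator_const _ hTmeas]
          simp [hμT, smul_eq_mul, measureReal_def]
          ring
  have hnorm3 : 2 * |ρh k| ≤ (Cl : ℝ) * (Real.pi / ‖k‖) * μT := by
    refine hnorm2.trans ?_
    have : (Cl : ℝ) * ‖h‖ ≤ (Cl : ℝ) * (Real.pi / ‖k‖) :=
      mul_le_mul_of_nonneg_left hnh (Cl.coe_nonneg)
    exact mul_le_mul_of_nonneg_right this hμTnn
  have e : Real.pi / ‖k‖ * ‖k‖ = Real.pi := div_mul_cancel₀ _ (ne_of_gt hknorm)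
  have h5 : 2 * |ρh k| * ‖k‖ ≤ (Cl : ℝ) * Real.pi * μT := by
    calc 2 * |ρh k| * ‖k‖ ≤ ((Cl : ℝ) * (Real.pi / ‖k‖) * μT) * ‖k‖ :=
          mul_le_mul_of_nonneg_right hnorm3 hknorm.le
      _ = (Cl : ℝ) * μT * (Real.pi / ‖k‖ * ‖k‖) := by ring
      _ = (Cl : ℝ) * Real.pi * μT := by rw [e]; ring
  linarith

end AuxLemmas

/-- Strict positivity of the coefficient `α₂₂` of the
low-frequency expansion of the linearized dynamics (proof of Lemma 13.4). -/
theorem alpha22_pos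
    (ρ : ℝ × ℝ → ℝ) (hρsm : ContDiff ℝ (⊤ : ℕ∞) ρ) (hρsupp : HasCompactSupport ρ)
    (hρrad : ∀ x y : ℝ × ℝ, x.1 ^ 2 + x.2 ^ 2 = y.1 ^ 2 + y.2 ^ 2 → ρ x = ρ y)
    (hρne : ρ ≠ 0)
    (hρmom : ∀ a b : ℕ, a + b ≤ 4 → (∫ x : ℝ × ℝ, x.1 ^ a * x.2 ^ b * ρ x) = 0)
    (ρh : ℝ × ℝ → ℝ)
    (hρh : ∀ k : ℝ × ℝ, (ρh k : ℂ) =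
      ∫ x : ℝ × ℝ,
        Complex.exp (-(Complex.I) * ((k.1 * x.1 + k.2 * x.2 : ℝ) : ℂ)) * (ρ x : ℂ))
    (v : ℝ) (hv0 : 0 ≤ v) (hv1 : v < 1)
    (m : ℝ) (hm : 0 < m) (w : ℝ) :
    0 < v ^ 2 *
          (∫ k : ℝ × ℝ,
            k.2 ^ 4 * (k.1 ^ 2 + k.2 ^ 2 + 3 * v ^ 2 * k.1 ^ 2) * ρh k ^ 2
              / ((k.1 ^ 2 + k.2 ^ 2) * (D0 v k) ^ 3))
        + w ^ 2 *
          (∫ k : ℝ × ℝ,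
            k.2 ^ 2 * (k.1 ^ 2 + k.2 ^ 2 + 3 * v ^ 2 * k.1 ^ 2) * gradSq ρh k
              / (D0 v k) ^ 3)
        + m
        + (∫ k : ℝ × ℝ, k.1 ^ 2 * ρh k ^ 2 / ((k.1 ^ 2 + k.2 ^ 2) * D0 v k))
        - 4 * v ^ 2 *
          (∫ k : ℝ × ℝ,
            k.1 ^ 2 * k.2 ^ 2 * ρh k ^ 2 / ((k.1 ^ 2 + k.2 ^ 2) * (D0 v k) ^ 2)) := by
  have hρc : Continuous ρ := hρsm.continuous
  have hv2 : v ^ 2 < 1 := by nlinarith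
  have h1v : (0:ℝ) < 1 - v ^ 2 := by linarith
  obtain ⟨L, hL0, hLip⟩ := rhoh_lip ρ hρc hρsupp ρh hρh
  have hmom0 : (∫ x : ℝ × ℝ, ρ x) = 0 := by
    have := hρmom 0 0 (by norm_num)
    simpa using this
  have hρh0 : ρh 0 = 0 := rhoh_zero ρ hmom0 ρh hρh
  obtain ⟨C2, hC20, hdecay⟩ := rhoh_decay ρ hρsm hρsupp ρh hρh
  have hρhcont : Continuous ρh := by
    have : LipschitzWith (Real.toNNReal L) ρh := by
      apply LipschitzWith.of_dist_le_mul
      intro x y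
      rw [Real.coe_toNNReal L hL0, Real.dist_eq, dist_eq_norm]
      exact hLip x y
    exact this.continuous
  have hρhm : Measurable ρh := hρhcont.measurable
  have hρhb : ∀ k : ℝ × ℝ, |ρh k| ≤ L * ‖k‖ := by
    intro k
    have := hLip k 0
    simpa [hρh0] using this
  -- basic facts about D0
  have hD0lb : ∀ k : ℝ × ℝ, (1 - v ^ 2) * (k.1 ^ 2 + k.2 ^ 2) ≤ D0 v k := by
    intro k; simp only [D0]; nlinarith [sq_nonneg k.1, sq_nonneg k.2]
  have hD0nn : ∀ k : ℝ × ℝ, 0 ≤ D0 v k := by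
    intro k
    refine le_trans ?_ (hD0lb k)
    positivity
  -- the key quantitative bound : ρh k ^ 2 * (1 + ‖k‖)^3 ≤ M * (k.1^2+k.2^2)
  set M : ℝ := 8 * L ^ 2 + 8 * C2 ^ 2 with hMdef
  have hM0 : 0 ≤ M := by positivity
  have hnorm_sq : ∀ k : ℝ × ℝ, ‖k‖ ^ 2 ≤ k.1 ^ 2 + k.2 ^ 2 := by
    intro k
    have hn : ‖k‖ = max |k.1| |k.2| := rfl
    rcases max_cases |k.1| |k.2| with ⟨h1, _⟩ | ⟨h1, _⟩ <;>
      · rw [hn, h1]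
        nlinarith [_root_.sq_abs k.1, _root_.sq_abs k.2, sq_nonneg k.1, sq_nonneg k.2]
  have hkey : ∀ k : ℝ × ℝ, ρh k ^ 2 * (1 + ‖k‖) ^ 3 ≤ M * (k.1 ^ 2 + k.2 ^ 2) := by
    intro k
    have hr2 := hnorm_sq k
    have hnn : (0:ℝ) ≤ ‖k‖ := norm_nonneg k
    rcases le_or_gt ‖k‖ 1 with hle | hgt
    · have hb : |ρh k| ^ 2 ≤ (L * ‖k‖) ^ 2 := pow_le_pow_left₀ (abs_nonneg _) (hρhb k) 2
      rw [_root_.sq_abs] at hb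
      have hcube : (1 + ‖k‖) ^ 3 ≤ 8 := by nlinarith
      nlinarith [sq_nonneg (ρh k), sq_nonneg L, sq_nonneg ‖k‖, sq_nonneg C2,
        mul_nonneg (mul_nonneg hnn hnn) hnn]
    · have hd := hdecay k hgt.le
      have hq : (|ρh k| * ‖k‖) ^ 2 ≤ C2 ^ 2 := pow_le_pow_left₀ (by positivity) hd 2
      have hq' : ρh k ^ 2 * ‖k‖ ^ 2 ≤ C2 ^ 2 := by
        calc ρh k ^ 2 * ‖k‖ ^ 2 = (|ρh k| * ‖k‖) ^ 2 := by
              rw [mul_pow, _root_.sq_abs]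
          _ ≤ C2 ^ 2 := hq
      have hcube : (1 + ‖k‖) ^ 3 ≤ 8 * ‖k‖ ^ 3 := by nlinarith
      have c1 : ρh k ^ 2 * (1 + ‖k‖) ^ 3 ≤ ρh k ^ 2 * (8 * ‖k‖ ^ 3) :=
        mul_le_mul_of_nonneg_left hcube (sq_nonneg _)
      have c2 : ρh k ^ 2 * (8 * ‖k‖ ^ 3) = 8 * (ρh k ^ 2 * ‖k‖ ^ 2) * ‖k‖ := by ring
      have c3 : 8 * (ρh k ^ 2 * ‖k‖ ^ 2) * ‖k‖ ≤ 8 * C2 ^ 2 * ‖k‖ := by nlinarith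
      have c4 : 8 * C2 ^ 2 * ‖k‖ ≤ 8 * C2 ^ 2 * ‖k‖ ^ 2 := by nlinarith
      have c5 : 8 * C2 ^ 2 * ‖k‖ ^ 2 ≤ M * (k.1 ^ 2 + k.2 ^ 2) := by nlinarith
      linarith [c1, c3, c4, c5, c2 ▸ c1]
  -- abbreviations for the four integrands
  set F1 : ℝ × ℝ → ℝ := fun k =>
      k.2 ^ 4 * (k.1 ^ 2 + k.2 ^ 2 + 3 * v ^ 2 * k.1 ^ 2) * ρh k ^ 2
        / ((k.1 ^ 2 + k.2 ^ 2) * (D0 v k) ^ 3) with hF1def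
  set F2 : ℝ × ℝ → ℝ := fun k =>
      k.2 ^ 2 * (k.1 ^ 2 + k.2 ^ 2 + 3 * v ^ 2 * k.1 ^ 2) * gradSq ρh k
        / (D0 v k) ^ 3 with hF2def
  set F3 : ℝ × ℝ → ℝ := fun k =>
      k.1 ^ 2 * ρh k ^ 2 / ((k.1 ^ 2 + k.2 ^ 2) * D0 v k) with hF3def
  set F4 : ℝ × ℝ → ℝ := fun k =>
      k.1 ^ 2 * k.2 ^ 2 * ρh k ^ 2 / ((k.1 ^ 2 + k.2 ^ 2) * (D0 v k) ^ 2) with hF4def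
  have hr2pos_of : ∀ k : ℝ × ℝ, k ≠ 0 → 0 < k.1 ^ 2 + k.2 ^ 2 := by
    intro k hk
    have h1 : k.1 ^ 2 + k.2 ^ 2 ≠ 0 := by
      intro h0
      apply hk
      have e1 : k.1 = 0 := by nlinarith [sq_nonneg k.1, sq_nonneg k.2]
      have e2 : k.2 = 0 := by nlinarith [sq_nonneg k.1, sq_nonneg k.2]
      exact Prod.ext_iff.mpr ⟨e1, e2⟩
    exact lt_of_le_of_ne (by positivity) (Ne.symm h1)
  have hDpos_of : ∀ k : ℝ × ℝ, k ≠ 0 → 0 < D0 v k := by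
    intro k hk
    exact lt_of_lt_of_le (by have := hr2pos_of k hk; positivity) (hD0lb k)
  -- comparison function and master bound
  set c : ℝ := 4 * M / (1 - v ^ 2) ^ 3 with hcdef
  have hc0 : 0 ≤ c := by positivity
  have hc : c * (1 - v ^ 2) ^ 3 = 4 * M := by
    rw [hcdef]; field_simp
  have hone_sub_le : (1 - v ^ 2) ≤ 1 := by nlinarith
  have hgint : Integrable (fun k : ℝ × ℝ => c * ((1 + ‖k‖) ^ 3)⁻¹) := by
    have h3 : (Module.finrank ℝ (ℝ × ℝ) : ℝ) < 3 := by
      simp only [Module.finrank_prod, Module.finrank_self]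
      norm_num
    have hint := (integrable_one_add_norm (E := ℝ × ℝ) (μ := volume) (r := 3) h3).const_mul c
    refine hint.congr (Filter.Eventually.of_forall fun k => ?_)
    have hx : (0:ℝ) ≤ 1 + ‖k‖ := by positivity
    beta_reduce
    rw [Real.rpow_neg hx, show ((3:ℝ)) = ((3:ℕ):ℝ) by norm_num, Real.rpow_natCast]
  have master : ∀ (j : ℕ) (poly : ℝ) (k : ℝ × ℝ), 0 < k.1 ^ 2 + k.2 ^ 2 → 0 ≤ poly →
      poly ≤ 4 * (k.1 ^ 2 + k.2 ^ 2) ^ j → 4 * M ≤ c * (1 - v ^ 2) ^ j →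
      poly * (ρh k ^ 2 * (1 + ‖k‖) ^ 3) ≤ c * ((k.1 ^ 2 + k.2 ^ 2) * D0 v k ^ j) := by
    intro j poly k hr2pos hp0 hpb hcj
    have hDj : ((1 - v ^ 2) * (k.1 ^ 2 + k.2 ^ 2)) ^ j ≤ D0 v k ^ j :=
      pow_le_pow_left₀ (by positivity) (hD0lb k) j
    calc poly * (ρh k ^ 2 * (1 + ‖k‖) ^ 3) ≤ poly * (M * (k.1 ^ 2 + k.2 ^ 2)) :=
          mul_le_mul_of_nonneg_left (hkey k) hp0
      _ ≤ (4 * (k.1 ^ 2 + k.2 ^ 2) ^ j) * (M * (k.1 ^ 2 + k.2 ^ 2)) :=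
          mul_le_mul_of_nonneg_right hpb (by positivity)
      _ = (4 * M) * ((k.1 ^ 2 + k.2 ^ 2) ^ (j + 1)) := by ring
      _ ≤ (c * (1 - v ^ 2) ^ j) * ((k.1 ^ 2 + k.2 ^ 2) ^ (j + 1)) :=
          mul_le_mul_of_nonneg_right hcj (by positivity)
      _ = c * ((k.1 ^ 2 + k.2 ^ 2) * ((1 - v ^ 2) * (k.1 ^ 2 + k.2 ^ 2)) ^ j) := by
          rw [mul_pow]; ring
      _ ≤ c * ((k.1 ^ 2 + k.2 ^ 2) * D0 v k ^ j) := by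
          exact mul_le_mul_of_nonneg_left (mul_le_mul_of_nonneg_left hDj hr2pos.le) hc0
  have hcj3 : 4 * M ≤ c * (1 - v ^ 2) ^ 3 := le_of_eq hc.symm
  have hcj2 : 4 * M ≤ c * (1 - v ^ 2) ^ 2 := by
    have := pow_le_pow_of_le_one h1v.le hone_sub_le (by norm_num : 2 ≤ 3)
    nlinarith [hc, hc0]
  have hcj1 : 4 * M ≤ c * (1 - v ^ 2) ^ 1 := by
    have := pow_le_pow_of_le_one h1v.le hone_sub_le (by norm_num : 1 ≤ 3)
    nlinarith [hc, hc0]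
  -- bounds for the three integrands
  have hb1 : ∀ k : ℝ × ℝ, ‖F1 k‖ ≤ c * ((1 + ‖k‖) ^ 3)⁻¹ := by
    intro k
    by_cases hk : k = 0
    · subst hk
      have h0 : F1 0 = 0 := by simp [hF1def]
      rw [h0, norm_zero]; positivity
    · have hr2pos := hr2pos_of k hk
      have hDpos := hDpos_of k hk
      have hFnn : 0 ≤ F1 k := by
        simp only [hF1def]
        exact div_nonneg (by positivity) (mul_nonneg hr2pos.le (by positivity))
      rw [Real.norm_eq_abs, abs_of_nonneg hFnn, ← div_eq_mul_inv,
        le_div_iff₀ (by positivity)]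
      simp only [hF1def]
      rw [div_mul_eq_mul_div, div_le_iff₀ (mul_pos hr2pos (pow_pos hDpos 3))]
      have hpoly : k.2 ^ 4 * (k.1 ^ 2 + k.2 ^ 2 + 3 * v ^ 2 * k.1 ^ 2)
          ≤ 4 * (k.1 ^ 2 + k.2 ^ 2) ^ 3 := by
        nlinarith [sq_nonneg k.1, sq_nonneg k.2, sq_nonneg v, hv2,
          mul_nonneg (sq_nonneg k.1) (sq_nonneg k.2),
          mul_nonneg (mul_nonneg (sq_nonneg k.1) (sq_nonneg k.1)) (sq_nonneg k.2),
          mul_nonneg (mul_nonneg (sq_nonneg k.2) (sq_nonneg k.2)) (sq_nonneg k.1)]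
      calc k.2 ^ 4 * (k.1 ^ 2 + k.2 ^ 2 + 3 * v ^ 2 * k.1 ^ 2) * ρh k ^ 2 * (1 + ‖k‖) ^ 3
          = (k.2 ^ 4 * (k.1 ^ 2 + k.2 ^ 2 + 3 * v ^ 2 * k.1 ^ 2)) * (ρh k ^ 2 * (1 + ‖k‖) ^ 3) := by
            ring
        _ ≤ c * ((k.1 ^ 2 + k.2 ^ 2) * D0 v k ^ 3) :=
            master 3 _ k hr2pos (by positivity) hpoly hcj3
  have hb3 : ∀ k : ℝ × ℝ, ‖F3 k‖ ≤ c * ((1 + ‖k‖) ^ 3)⁻¹ := by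
    intro k
    by_cases hk : k = 0
    · subst hk
      have h0 : F3 0 = 0 := by simp [hF3def]
      rw [h0, norm_zero]; positivity
    · have hr2pos := hr2pos_of k hk
      have hDpos := hDpos_of k hk
      have hFnn : 0 ≤ F3 k := by
        simp only [hF3def]
        exact div_nonneg (by positivity) (mul_nonneg hr2pos.le (hD0nn k))
      rw [Real.norm_eq_abs, abs_of_nonneg hFnn, ← div_eq_mul_inv,
        le_div_iff₀ (by positivity)]
      simp only [hF3def]
      rw [div_mul_eq_mul_div, div_le_iff₀ (mul_pos hr2pos hDpos)]
      have hpoly : k.1 ^ 2 ≤ 4 * (k.1 ^ 2 + k.2 ^ 2) ^ 1 := by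
        nlinarith [sq_nonneg k.1, sq_nonneg k.2]
      have hmm := master 1 (k.1 ^ 2) k hr2pos (by positivity) hpoly hcj1
      rw [pow_one] at hmm
      calc k.1 ^ 2 * ρh k ^ 2 * (1 + ‖k‖) ^ 3
          = k.1 ^ 2 * (ρh k ^ 2 * (1 + ‖k‖) ^ 3) := by ring
        _ ≤ c * ((k.1 ^ 2 + k.2 ^ 2) * D0 v k) := hmm
  have hb4 : ∀ k : ℝ × ℝ, ‖F4 k‖ ≤ c * ((1 + ‖k‖) ^ 3)⁻¹ := by
    intro k
    by_cases hk : k = 0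
    · subst hk
      have h0 : F4 0 = 0 := by simp [hF4def]
      rw [h0, norm_zero]; positivity
    · have hr2pos := hr2pos_of k hk
      have hDpos := hDpos_of k hk
      have hFnn : 0 ≤ F4 k := by
        simp only [hF4def]
        exact div_nonneg (by positivity) (mul_nonneg hr2pos.le (by positivity))
      rw [Real.norm_eq_abs, abs_of_nonneg hFnn, ← div_eq_mul_inv,
        le_div_iff₀ (by positivity)]
      simp only [hF4def]
      rw [div_mul_eq_mul_div, div_le_iff₀ (mul_pos hr2pos (pow_pos hDpos 2))]
      have hpoly : k.1 ^ 2 * k.2 ^ 2 ≤ 4 * (k.1 ^ 2 + k.2 ^ 2) ^ 2 := by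
        nlinarith [sq_nonneg k.1, sq_nonneg k.2, mul_nonneg (sq_nonneg k.1) (sq_nonneg k.2)]
      calc k.1 ^ 2 * k.2 ^ 2 * ρh k ^ 2 * (1 + ‖k‖) ^ 3
          = (k.1 ^ 2 * k.2 ^ 2) * (ρh k ^ 2 * (1 + ‖k‖) ^ 3) := by ring
        _ ≤ c * ((k.1 ^ 2 + k.2 ^ 2) * D0 v k ^ 2) :=
            master 2 _ k hr2pos (by positivity) hpoly hcj2
  -- integrability
  have hmeasD : Measurable (D0 v) := by unfold D0; fun_prop
  have hI1 : Integrable F1 := by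
    refine hgint.mono' ?_ (Filter.Eventually.of_forall hb1)
    rw [hF1def]
    apply Measurable.aestronglyMeasurable
    fun_prop
  have hI3 : Integrable F3 := by
    refine hgint.mono' ?_ (Filter.Eventually.of_forall hb3)
    rw [hF3def]
    apply Measurable.aestronglyMeasurable
    fun_prop
  have hI4 : Integrable F4 := by
    refine hgint.mono' ?_ (Filter.Eventually.of_forall hb4)
    rw [hF4def]
    apply Measurable.aestronglyMeasurable
    fun_prop
  -- pointwise SOS inequality
  have hpt : ∀ k : ℝ × ℝ, 0 ≤ v ^ 2 * F1 k + F3 k - 4 * v ^ 2 * F4 k := by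
    intro k
    by_cases hk : k = 0
    · subst hk; simp [hF1def, hF3def, hF4def]
    · have hr2pos := hr2pos_of k hk
      have hDpos := hDpos_of k hk
      have hDne : k.1 ^ 2 + k.2 ^ 2 - v ^ 2 * k.1 ^ 2 ≠ 0 := by
        have := hDpos; simp only [D0] at this; exact this.ne'
      have heq : v ^ 2 * F1 k + F3 k - 4 * v ^ 2 * F4 k =
          ((ρh k * k.1 * ((1 - v ^ 2) * k.1 ^ 2 + (1 - 2 * v ^ 2) * k.2 ^ 2)) ^ 2
            + v ^ 2 * (1 - v ^ 2) * ρh k ^ 2 * k.1 ^ 2 * k.2 ^ 4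
            + v ^ 2 * ρh k ^ 2 * k.2 ^ 6)
          / ((k.1 ^ 2 + k.2 ^ 2) * (k.1 ^ 2 + k.2 ^ 2 - v ^ 2 * k.1 ^ 2) ^ 3) := by
        simp only [hF1def, hF3def, hF4def, D0]
        field_simp
        ring
      rw [heq]
      apply div_nonneg
      · have t1 := sq_nonneg (ρh k * k.1 * ((1 - v ^ 2) * k.1 ^ 2 + (1 - 2 * v ^ 2) * k.2 ^ 2))
        have t2 : 0 ≤ v ^ 2 * (1 - v ^ 2) * ρh k ^ 2 * k.1 ^ 2 * k.2 ^ 4 := by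
          apply mul_nonneg
          apply mul_nonneg
          apply mul_nonneg
          exact mul_nonneg (sq_nonneg v) h1v.le
          exact sq_nonneg _
          exact sq_nonneg _
          positivity
        have t3 : 0 ≤ v ^ 2 * ρh k ^ 2 * k.2 ^ 6 := by positivity
        linarith
      · have := hDpos
        simp only [D0] at this
        positivity
  -- nonnegativity of the gradient term
  have hI2nn : 0 ≤ ∫ k, F2 k := by
    apply integral_nonneg
    intro k
    simp only [hF2def]
    apply div_nonneg
    · simp only [gradSq]
      positivity
    · exact pow_nonneg (hD0nn k) 3
  -- combine
  have hIsum : 0 ≤ ∫ k, (v ^ 2 * F1 k + F3 k - 4 * v ^ 2 * F4 k) := integral_nonneg hpt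
  have hsplit : (∫ k, (v ^ 2 * F1 k + F3 k - 4 * v ^ 2 * F4 k))
      = v ^ 2 * (∫ k, F1 k) + (∫ k, F3 k) - 4 * v ^ 2 * (∫ k, F4 k) := by
    have hIc : Integrable (fun k : ℝ × ℝ => v ^ 2 * F1 k) := hI1.const_mul _
    have hIa : Integrable (fun k : ℝ × ℝ => v ^ 2 * F1 k + F3 k) := hIc.add hI3
    have hIb : Integrable (fun k : ℝ × ℝ => 4 * v ^ 2 * F4 k) := hI4.const_mul _
    rw [integral_sub hIa hIb, integral_add hIc hI3, integral_const_mul, integral_const_mul]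
  have hw2 : 0 ≤ w ^ 2 * ∫ k, F2 k := mul_nonneg (sq_nonneg w) hI2nn
  have hmain : 0 ≤ v ^ 2 * (∫ k, F1 k) + (∫ k, F3 k) - 4 * v ^ 2 * (∫ k, F4 k) :=
    hsplit ▸ hIsum
  linarith [hmain, hw2, hm]


end
end
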